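/- arXiv:2407.09305 — 5 statements merged into one kernel-verified Lean document; each statement's English description precedes it below -/
import Mathlib

section
/- Let d > b and a < c (dominant-strategy game with action 2 dominant), and let x be a solution of the uncontrolled replicator equation with x(0) ∈ [0,1). Then x(t) → 0 as t → ∞. -/
/-!
Along a solution, `ẋ = g x` and `(1 - x)˙ = h (1 - x)` with continuous `g, h`, so by uniqueness
neither `x` nor `1 - x` changes sign and `x` stays in `[0, 1]`. There the growth rate
`(a + d - b - c) x + (b - d) = x (a - c) + (1 - x) (b - d)` is at most
`p = max (a - c) (b - d) < 0`. Hence `x` decreases, so `1 - x ≥ 1 - x 0 > 0` and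
`ẋ ≤ (1 - x 0) p x`, which forces exponential decay to `0`.
-/

/-- `x` is a solution of the uncontrolled replicator equation
`ẋ = x(1−x)((a+d−b−c)x + b − d)` on `[0,∞)`. -/
def IsReplicatorSolution (a b c d : ℝ) (x : ℝ → ℝ) : Prop :=
  ∀ t : ℝ, 0 ≤ t →
    HasDerivAt x (x t * (1 - x t) * ((a + d - b - c) * x t + (b - d))) t

open Set Filter Topology Real

theorem nonneg_of_hasDerivAt_eq_mul {y g : ℝ → ℝ} {t₀ t₁ : ℝ} (ht : t₀ ≤ t₁)
    (hg : ContinuousOn g (Icc t₀ t₁)) (hy : ∀ t ∈ Icc t₀ t₁, HasDerivAt y (g t * y t) t)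
    (h₀ : 0 ≤ y t₀) : 0 ≤ y t₁ := by
  by_contra! hneg
  -- Grönwall: from a zero `s` of `y` on, `|y'| ≤ K |y|` forces `y = 0`.
  have hcont : ContinuousOn y (Icc t₀ t₁) := fun t h ↦ (hy t h).continuousAt.continuousWithinAt
  obtain ⟨s, hs, hys⟩ := intermediate_value_Icc' ht hcont ⟨hneg.le, h₀⟩
  obtain ⟨K, hK⟩ := isCompact_Icc.exists_bound_of_continuousOn hg
  have hsub : Icc s t₁ ⊆ Icc t₀ t₁ := Icc_subset_Icc_left hs.1
  have hzero := eq_zero_of_abs_deriv_le_mul_abs_self_of_eq_zero_right (hcont.mono hsub)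
    (fun t h ↦ (hy t (hsub (Ico_subset_Icc_self h))).hasDerivWithinAt) hys
    (fun t h ↦ by
      rw [norm_mul]
      exact mul_le_mul_of_nonneg_right (hK t (hsub (Ico_subset_Icc_self h))) (norm_nonneg _))
    t₁ (right_mem_Icc.2 hs.2)
  exact hneg.ne hzero

theorem le_mul_exp_of_deriv_le_mul {f f' : ℝ → ℝ} {κ : ℝ}
    (hf : ∀ t, 0 ≤ t → HasDerivAt f (f' t) t) (hle : ∀ t, 0 ≤ t → f' t ≤ κ * f t)
    {t : ℝ} (ht : 0 ≤ t) : f t ≤ f 0 * exp (κ * t) := by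
  have hz : ∀ s, 0 ≤ s → HasDerivAt (fun s ↦ f s * exp (-κ * s))
      ((f' s - κ * f s) * exp (-κ * s)) s := fun s hs ↦
    ((hf s hs).mul ((hasDerivAt_id' s).const_mul (-κ)).exp).congr_deriv (by ring)
  have hanti : AntitoneOn (fun s ↦ f s * exp (-κ * s)) (Ici 0) := by
    refine antitoneOn_of_hasDerivWithinAt_nonpos (convex_Ici 0)
      (fun s hs ↦ (hz s hs).continuousAt.continuousWithinAt)
      (fun s hs ↦ (hz s (interior_subset hs)).hasDerivWithinAt) fun s hs ↦ ?_
    exact mul_nonpos_of_nonpos_of_nonneg (by linarith [hle s (interior_subset hs)]) (exp_pos _).le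
  have := hanti self_mem_Ici (mem_Ici.2 ht) ht
  simp only [mul_zero, exp_zero, mul_one] at this
  calc f t = f t * exp (-κ * t) * exp (κ * t) := by rw [mul_assoc, ← exp_add]; simp
    _ ≤ f 0 * exp (κ * t) := mul_le_mul_of_nonneg_right this (exp_pos _).le

theorem IsReplicatorSolution.mem_Icc {a b c d : ℝ} {x : ℝ → ℝ}
    (hsol : IsReplicatorSolution a b c d x) (hx₀ : x 0 ∈ Icc (0 : ℝ) 1) {t : ℝ} (ht : 0 ≤ t) :
    x t ∈ Icc (0 : ℝ) 1 := by
  have hcont : ContinuousOn x (Icc 0 t) :=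
    fun s hs ↦ (hsol s hs.1).continuousAt.continuousWithinAt
  constructor
  · exact nonneg_of_hasDerivAt_eq_mul ht
      (g := fun s ↦ (1 - x s) * ((a + d - b - c) * x s + (b - d))) (by fun_prop)
      (fun s hs ↦ (hsol s hs.1).congr_deriv (by ring)) hx₀.1
  · have := nonneg_of_hasDerivAt_eq_mul ht (y := fun s ↦ 1 - x s)
      (g := fun s ↦ -(x s * ((a + d - b - c) * x s + (b - d)))) (by fun_prop)
      (fun s hs ↦ ((hsol s hs.1).const_sub 1).congr_deriv (by ring)) (by simpa using hx₀.2)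
    simpa using this

theorem replicator_payoff_le_max {a b c d y : ℝ} (hy : y ∈ Icc (0 : ℝ) 1) :
    (a + d - b - c) * y + (b - d) ≤ max (a - c) (b - d) := by
  have h₁ : y * (a - c) ≤ y * max (a - c) (b - d) :=
    mul_le_mul_of_nonneg_left (le_max_left ..) hy.1
  have h₂ : (1 - y) * (b - d) ≤ (1 - y) * max (a - c) (b - d) :=
    mul_le_mul_of_nonneg_left (le_max_right ..) (by linarith [hy.2])
  linarith

/-- In a dominant-strategy game with action 2 dominant (`d > b`, `a < c`), any solution
of the uncontrolled replicator equation with `x(0) ∈ [0,1)` converges to `0`. -/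
theorem replicator_dominant (a b c d : ℝ) (hdb : d > b) (hac : a < c)
    (x : ℝ → ℝ) (hsol : IsReplicatorSolution a b c d x)
    (hx0 : x 0 ∈ Set.Ico (0 : ℝ) 1) :
    Filter.Tendsto x Filter.atTop (nhds 0) := by
  have hmem : ∀ t, 0 ≤ t → x t ∈ Icc (0 : ℝ) 1 := fun t ↦ hsol.mem_Icc (Ico_subset_Icc_self hx0)
  set p := max (a - c) (b - d)
  have hp : p < 0 := max_lt (by linarith) (by linarith)
  have hpayoff : ∀ t, 0 ≤ t → (a + d - b - c) * x t + (b - d) ≤ p :=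
    fun t ht ↦ replicator_payoff_le_max (hmem t ht)
  have hdecr : ∀ t, 0 ≤ t → x t ≤ x 0 := fun t ht ↦ by
    simpa using le_mul_exp_of_deriv_le_mul (κ := 0) hsol (fun s hs ↦ by
      have := hmem s hs
      nlinarith [mul_nonneg this.1 (sub_nonneg.2 this.2), hpayoff s hs]) ht
  have hdecay : ∀ t, 0 ≤ t → x t ≤ x 0 * exp ((1 - x 0) * p * t) := fun t ↦
    le_mul_exp_of_deriv_le_mul (κ := (1 - x 0) * p) hsol fun s hs ↦ by
      have hq := hpayoff s hs
      have hq₀ : 0 ≤ -((a + d - b - c) * x s + (b - d)) := by linarith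
      have hfactor : (1 - x s) * ((a + d - b - c) * x s + (b - d)) ≤ (1 - x 0) * p := by
        nlinarith [mul_le_mul_of_nonneg_left hq (sub_nonneg.2 hx0.2.le),
          mul_nonneg (sub_nonneg.2 (hdecr s hs)) hq₀]
      nlinarith [mul_le_mul_of_nonneg_left hfactor (hmem s hs).1]
  have hexp : Tendsto (fun t ↦ x 0 * exp ((1 - x 0) * p * t)) atTop (𝓝 0) := by
    have hrate : (1 - x 0) * p < 0 := mul_neg_of_pos_of_neg (sub_pos.2 hx0.2) hp
    simpa using
      (tendsto_exp_atBot.comp (tendsto_id.const_mul_atTop_of_neg hrate)).const_mul (x 0)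
  exact tendsto_of_tendsto_of_tendsto_of_le_of_le' tendsto_const_nhds hexp
    (eventually_ge_atTop 0 |>.mono fun t ht ↦ (hmem t ht).1)
    (eventually_ge_atTop 0 |>.mono hdecay)
end

section
/- Let d < b and a < c (anti-coordination game), so that x* = (d−b)/(a+d−b−c) ∈ (0,1), and let x be a solution of the uncontrolled replicator equation with x(0) ∈ (0,1). Then x(t) → x* as t → ∞. -/
/-!
With `A = a + d - b - c < 0` the right-hand side factors as `A y (1 - y) (y - x*)`: the points
`0`, `x*`, `1` are equilibria, the field is positive on `(0, x*)` and negative on `(x*, 1)`.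
Since the field is locally Lipschitz, a solution can never reach an equilibrium it did not start
at, so it stays in `(0, x*)` or in `(x*, 1)` and is monotone there. Its limit must be an
equilibrium (mean value theorem), and the only one available is `x*`.
-/

open Set Filter Topology

theorem MonotoneOn.exists_tendsto_atTop {α β : Type*} [LinearOrder α]
    [ConditionallyCompleteLinearOrder β] [TopologicalSpace β] [OrderTopology β]
    {f : α → β} {a : α} (hf : MonotoneOn f (Ici a)) (hb : BddAbove (f '' Ici a)) :
    ∃ L, Tendsto f atTop (𝓝 L) := by
  have hg : Monotone fun t => f (max a t) := fun s t hst =>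
    hf (le_max_left a s) (le_max_left a t) (max_le_max le_rfl hst)
  have hgb : BddAbove (range fun t => f (max a t)) :=
    hb.mono (range_subset_iff.mpr fun t => mem_image_of_mem f (le_max_left a t))
  refine ⟨_, (tendsto_atTop_ciSup hg hgb).congr' ?_⟩
  filter_upwards [eventually_ge_atTop a] with t ht
  rw [max_eq_right ht]

def IsForwardSolution {E : Type*} [NormedAddCommGroup E] [NormedSpace ℝ E]
    (v : E → E) (x : ℝ → E) : Prop :=
  ∀ t : ℝ, 0 ≤ t → HasDerivAt x (v (x t)) t

namespace IsForwardSolution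

section NormedSpace

variable {E : Type*} [NormedAddCommGroup E] [NormedSpace ℝ E] {v : E → E} {x : ℝ → E}

theorem continuousOn (hx : IsForwardSolution v x) : ContinuousOn x (Ici 0) :=
  fun t ht => (hx t ht).continuousAt.continuousWithinAt

theorem neg (hx : IsForwardSolution v x) : IsForwardSolution (fun y => -v (-y)) (-x) := by
  intro t ht
  simpa only [Pi.neg_apply, neg_neg] using (hx t ht).neg

/-- Compare `x` with the constant solution `e` by uniqueness of solutions, forward or backward
in time from `s`. -/
theorem apply_eq_of_apply_eq (hx : IsForwardSolution v x) (hv : LocallyLipschitz v)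
    {e : E} (he : v e = 0) {s t : ℝ} (hs : 0 ≤ s) (ht : 0 ≤ t) (hxs : x s = e) : x t = e := by
  set S := insert e (x '' uIcc s t)
  have hI : uIcc s t ⊆ Ici 0 := fun r hr => le_trans (le_min hs ht) hr.1
  have hS : IsCompact S :=
    (isCompact_uIcc.image_of_continuousOn (hx.continuousOn.mono hI)).insert e
  obtain ⟨K, hK⟩ := hv.locallyLipschitzOn.exists_lipschitzOnWith_of_compact hS
  have hxS : ∀ r ∈ uIcc s t, x r ∈ S := fun r hr => mem_insert_of_mem e (mem_image_of_mem x hr)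
  have hconst : ∀ (r : ℝ) (D : Set ℝ), HasDerivWithinAt (fun _ => e) (v e) D r := fun r D => by
    rw [he]; exact hasDerivWithinAt_const r D e
  rcases le_total s t with hst | hts
  · have hI' : Icc s t = uIcc s t := (uIcc_of_le hst).symm
    refine ODE_solution_unique_of_mem_Icc_right (v := fun _ => v) (s := fun _ => S)
      (fun _ _ => hK) (hx.continuousOn.mono (hI' ▸ hI))
      (fun r hr =>
        (hx r (hI (hI' ▸ Ico_subset_Icc_self hr))).hasDerivWithinAt)
      (fun r hr => hxS r (hI' ▸ Ico_subset_Icc_self hr)) continuousOn_const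
      (fun r _ => hconst r _) (fun _ _ => mem_insert e _) hxs ⟨hst, le_rfl⟩
  · have hI' : Icc t s = uIcc s t := (uIcc_of_ge hts).symm
    refine ODE_solution_unique_of_mem_Icc_left (v := fun _ => v) (s := fun _ => S)
      (fun _ _ => hK) (hx.continuousOn.mono (hI' ▸ hI))
      (fun r hr =>
        (hx r (hI (hI' ▸ Ioc_subset_Icc_self hr))).hasDerivWithinAt)
      (fun r hr => hxS r (hI' ▸ Ioc_subset_Icc_self hr)) continuousOn_const
      (fun r _ => hconst r _) (fun _ _ => mem_insert e _) hxs ⟨le_rfl, hts⟩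

end NormedSpace

variable {v : ℝ → ℝ} {x : ℝ → ℝ}

theorem mapsTo_Ioo (hx : IsForwardSolution v x) (hv : LocallyLipschitz v) {lo hi : ℝ}
    (hlo : v lo = 0) (hhi : v hi = 0) (h0 : x 0 ∈ Ioo lo hi) : MapsTo x (Ici 0) (Ioo lo hi) := by
  have hconn : (x '' Ici 0).OrdConnected :=
    isPreconnected_iff_ordConnected.mp (isPreconnected_Ici.image x hx.continuousOn)
  have hx0 : x 0 ∈ x '' Ici 0 := mem_image_of_mem x (mem_Ici.mpr le_rfl)
  intro t ht
  have hxt : x t ∈ x '' Ici 0 := mem_image_of_mem x ht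
  by_contra hout
  rw [mem_Ioo, not_and_or, not_lt, not_lt] at hout
  rcases hout with hle | hge
  · obtain ⟨s, hs, hxs⟩ := hconn.out hxt hx0 ⟨hle, h0.1.le⟩
    exact h0.1.ne' (hx.apply_eq_of_apply_eq hv hlo hs le_rfl hxs)
  · obtain ⟨s, hs, hxs⟩ := hconn.out hx0 hxt ⟨h0.2.le, hge⟩
    exact h0.2.ne (hx.apply_eq_of_apply_eq hv hhi hs le_rfl hxs)

theorem monotoneOn (hx : IsForwardSolution v x) (hpos : ∀ t, 0 ≤ t → 0 ≤ v (x t)) :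
    MonotoneOn x (Ici 0) :=
  monotoneOn_of_hasDerivWithinAt_nonneg (convex_Ici 0) hx.continuousOn
    (fun t ht => (hx t (interior_subset ht)).hasDerivWithinAt)
    (fun t ht => hpos t (interior_subset ht))

/-- The limit of a convergent solution is an equilibrium: by the mean value theorem,
`v (x ξₙ) = x (n + 1) - x n → 0` for some `ξₙ ∈ (n, n + 1)`. -/
theorem apply_eq_zero_of_tendsto (hx : IsForwardSolution v x) (hv : Continuous v) {L : ℝ}
    (hL : Tendsto x atTop (𝓝 L)) : v L = 0 := by
  have hmvt (n : ℕ) : ∃ ξ ∈ Ioo (n : ℝ) (n + 1), v (x ξ) = x (n + 1) - x n := by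
    obtain ⟨ξ, hξ, h⟩ := exists_hasDerivAt_eq_slope x (fun t => v (x t))
      (lt_add_one (n : ℝ)) (hx.continuousOn.mono fun r hr => n.cast_nonneg.trans hr.1)
      (fun r hr => hx r (n.cast_nonneg.trans hr.1.le))
    exact ⟨ξ, hξ, by rw [h, add_sub_cancel_left, div_one]⟩
  choose ξ hξ hvξ using hmvt
  have hξ_top : Tendsto ξ atTop atTop :=
    tendsto_atTop_mono (fun n => (hξ n).1.le) tendsto_natCast_atTop_atTop
  have hlhs : Tendsto (fun n => v (x (ξ n))) atTop (𝓝 (v L)) :=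
    (hv.tendsto L).comp (hL.comp hξ_top)
  have hrhs : Tendsto (fun n : ℕ => x (n + 1) - x n) atTop (𝓝 (L - L)) :=
    (hL.comp (tendsto_natCast_atTop_atTop.atTop_add tendsto_const_nhds)).sub
      (hL.comp tendsto_natCast_atTop_atTop)
  rw [sub_self] at hrhs
  exact tendsto_nhds_unique (hlhs.congr hvξ) hrhs

theorem tendsto_of_pos (hx : IsForwardSolution v x) (hv : Continuous v) {lo hi : ℝ}
    (hpos : ∀ y ∈ Ioo lo hi, 0 < v y) (hmem : MapsTo x (Ici 0) (Ioo lo hi)) :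
    Tendsto x atTop (𝓝 hi) := by
  have hmono := hx.monotoneOn fun t ht => (hpos _ (hmem ht)).le
  obtain ⟨L, hL⟩ := hmono.exists_tendsto_atTop
    ⟨hi, by rintro _ ⟨t, ht, rfl⟩; exact (hmem ht).2.le⟩
  have hx0L : x 0 ≤ L := ge_of_tendsto hL <| (eventually_ge_atTop 0).mono
    fun t ht => hmono (mem_Ici.mpr le_rfl) ht ht
  have hLhi : L ≤ hi := le_of_tendsto hL <| (eventually_ge_atTop 0).mono
    fun t ht => (hmem ht).2.le
  obtain hLhi | rfl := hLhi.lt_or_eq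
  · have hL_mem : L ∈ Ioo lo hi := ⟨(hmem (mem_Ici.mpr le_rfl)).1.trans_le hx0L, hLhi⟩
    exact absurd (hx.apply_eq_zero_of_tendsto hv hL) (hpos L hL_mem).ne'
  · exact hL

theorem tendsto_of_neg (hx : IsForwardSolution v x) (hv : Continuous v) {lo hi : ℝ}
    (hneg : ∀ y ∈ Ioo lo hi, v y < 0) (hmem : MapsTo x (Ici 0) (Ioo lo hi)) :
    Tendsto x atTop (𝓝 lo) := by
  have h := hx.neg.tendsto_of_pos (hv.comp continuous_neg).neg (lo := -hi) (hi := -lo)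
    (fun y hy => neg_pos.mpr (hneg (-y) ⟨lt_neg.mp hy.2, neg_lt.mp hy.1⟩))
    (fun t ht => ⟨neg_lt_neg (hmem ht).2, neg_lt_neg (hmem ht).1⟩)
  simpa using h.neg

end IsForwardSolution

def replicatorField (a b c d y : ℝ) : ℝ :=
  y * (1 - y) * ((a + d - b - c) * y + (b - d))

section Replicator

variable {a b c d : ℝ}

theorem IsReplicatorSolution.isForwardSolution {x : ℝ → ℝ}
    (hx : IsReplicatorSolution a b c d x) : IsForwardSolution (replicatorField a b c d) x :=
  hx

theorem contDiff_replicatorField {n : WithTop ℕ∞} :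
    ContDiff ℝ n (replicatorField a b c d) := by
  unfold replicatorField
  fun_prop

theorem replicatorField_zero : replicatorField a b c d 0 = 0 := by
  simp [replicatorField]

theorem replicatorField_one : replicatorField a b c d 1 = 0 := by
  simp [replicatorField]

theorem replicatorField_eq_mul (hA : a + d - b - c ≠ 0) (y : ℝ) :
    replicatorField a b c d y =
      (a + d - b - c) * (y * (1 - y) * (y - (d - b) / (a + d - b - c))) := by
  unfold replicatorField
  field_simp
  ring

theorem replicatorField_equilibrium (hA : a + d - b - c ≠ 0) :
    replicatorField a b c d ((d - b) / (a + d - b - c)) = 0 := by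
  rw [replicatorField_eq_mul hA, sub_self, mul_zero, mul_zero]

theorem anticoordination_equilibrium_mem_Ioo (hdb : d < b) (hac : a < c) :
    (d - b) / (a + d - b - c) ∈ Ioo 0 1 :=
  ⟨div_pos_of_neg_of_neg (by linarith) (by linarith),
    (div_lt_one_of_neg (by linarith)).mpr (by linarith)⟩

theorem replicatorField_pos (hdb : d < b) (hac : a < c) {y : ℝ}
    (hy : y ∈ Ioo 0 ((d - b) / (a + d - b - c))) : 0 < replicatorField a b c d y := by
  have hA : a + d - b - c < 0 := by linarith
  have hy1 : y < 1 := hy.2.trans (anticoordination_equilibrium_mem_Ioo hdb hac).2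
  rw [replicatorField_eq_mul hA.ne]
  exact mul_pos_of_neg_of_neg hA
    (mul_neg_of_pos_of_neg (mul_pos hy.1 (sub_pos.mpr hy1)) (sub_neg.mpr hy.2))

theorem replicatorField_neg (hdb : d < b) (hac : a < c) {y : ℝ}
    (hy : y ∈ Ioo ((d - b) / (a + d - b - c)) 1) : replicatorField a b c d y < 0 := by
  have hA : a + d - b - c < 0 := by linarith
  have hy0 : 0 < y := (anticoordination_equilibrium_mem_Ioo hdb hac).1.trans hy.1
  rw [replicatorField_eq_mul hA.ne]
  exact mul_neg_of_neg_of_pos hA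
    (mul_pos (mul_pos hy0 (sub_pos.mpr hy.2)) (sub_pos.mpr hy.1))

end Replicator

/-- In an anti-coordination game (`d < b`, `a < c`), `x* = (d−b)/(a+d−b−c) ∈ (0,1)`, and
any solution of the uncontrolled replicator equation with `x(0) ∈ (0,1)` converges
to `x*`. -/
theorem replicator_anticoordination (a b c d : ℝ) (hdb : d < b) (hac : a < c)
    (x : ℝ → ℝ) (hsol : IsReplicatorSolution a b c d x)
    (hx0 : x 0 ∈ Set.Ioo (0 : ℝ) 1) :
    (d - b) / (a + d - b - c) ∈ Set.Ioo (0 : ℝ) 1 ∧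
    Filter.Tendsto x Filter.atTop (nhds ((d - b) / (a + d - b - c))) := by
  have hA : a + d - b - c ≠ 0 := by linarith
  have hx := hsol.isForwardSolution
  have hv : ContDiff ℝ 1 (replicatorField a b c d) := contDiff_replicatorField
  have hp := replicatorField_equilibrium hA
  refine ⟨anticoordination_equilibrium_mem_Ioo hdb hac, ?_⟩
  rcases lt_trichotomy (x 0) ((d - b) / (a + d - b - c)) with hlt | heq | hgt
  · exact hx.tendsto_of_pos hv.continuous (fun y hy => replicatorField_pos hdb hac hy)
      (hx.mapsTo_Ioo hv.locallyLipschitz replicatorField_zero hp ⟨hx0.1, hlt⟩)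
  · exact tendsto_const_nhds.congr' <| (eventually_ge_atTop 0).mono fun t ht =>
      (hx.apply_eq_of_apply_eq hv.locallyLipschitz hp le_rfl ht heq).symm
  · exact hx.tendsto_of_neg hv.continuous (fun y hy => replicatorField_neg hdb hac hy)
      (hx.mapsTo_Ioo hv.locallyLipschitz hp replicatorField_one ⟨hgt, hx0.2⟩)
end

section
/- Let x̄ ∈ (0,1), ḡ > 0, p > 0, K ∈ ℝ, and define V(x, g) = x̄/x + (1−x̄)·ln(x/(1−x)) + (g − ḡ·ln g)/p + K for x ∈ (0,1) and g > 0. If x, g : I → ℝ are differentiable on an interval I with x(t) ∈ (0,1) and g(t) > 0 for all t ∈ I, and satisfy ẋ = −x²(1−x)(g − ḡ) and ġ = p·g·(x − x̄) on I, then the function t ↦ V(x(t), g(t)) is constant on I (V is a first integral of this reduced system). -/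
/-- The Lyapunov candidate `V(x, g) = xbar/x + (1−xbar)·ln(x/(1−x)) + (g − gbar·ln g)/p + K`. -/
noncomputable def V (xbar gbar p K x g : ℝ) : ℝ :=
  xbar / x + (1 - xbar) * Real.log (x / (1 - x)) + (g - gbar * Real.log g) / p + K

theorem Set.OrdConnected.eq_of_hasDerivAt_eq_zero {I : Set ℝ} (hI : I.OrdConnected)
    {f : ℝ → ℝ} (hf : ∀ t ∈ I, HasDerivAt f 0 t) {t s : ℝ} (ht : t ∈ I) (hs : s ∈ I) :
    f t = f s := by
  have hle := hI.convex.norm_image_sub_le_of_norm_hasDerivWithin_le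
    (fun u hu => (hf u hu).hasDerivWithinAt) (C := 0) (fun _ _ => by simp) hs ht
  rwa [zero_mul, norm_le_zero_iff, sub_eq_zero] at hle

theorem hasDerivAt_V_comp {xbar gbar p K x' g' t : ℝ} {x g : ℝ → ℝ}
    (hx : HasDerivAt x x' t) (hg : HasDerivAt g g' t) (hx0 : x t ≠ 0) (hx1 : x t ≠ 1)
    (hg0 : g t ≠ 0) :
    HasDerivAt (fun u => V xbar gbar p K (x u) (g u))
      ((-xbar / x t ^ 2 + (1 - xbar) / (x t * (1 - x t))) * x' + (1 - gbar / g t) / p * g') t := by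
  have h1x : 1 - x t ≠ 0 := sub_ne_zero.2 hx1.symm
  have hxbar := (hasDerivAt_const t xbar).div hx hx0
  have hodds : HasDerivAt (fun u => x u / (1 - x u)) _ t :=
    hx.div ((hasDerivAt_const t 1).sub hx) h1x
  have hlogOdds := (hodds.log (div_ne_zero hx0 h1x)).const_mul (1 - xbar)
  have hgTerm := (hg.sub ((hg.log hg0).const_mul gbar)).div_const p
  refine (((hxbar.add hlogOdds).add hgTerm).add_const K).congr_deriv ?_
  field_simp
  ring

/- Along the field, the `x`-part contributes `-(x - xbar)(g - gbar)` and the `g`-part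
`(g - gbar)(x - xbar)`. -/
theorem V_deriv_along_field_eq_zero {xbar gbar p x g : ℝ} (hp : p ≠ 0) (hx0 : x ≠ 0)
    (hx1 : x ≠ 1) (hg0 : g ≠ 0) :
    (-xbar / x ^ 2 + (1 - xbar) / (x * (1 - x))) * (-x ^ 2 * (1 - x) * (g - gbar)) +
      (1 - gbar / g) / p * (p * g * (x - xbar)) = 0 := by
  have h1x : 1 - x ≠ 0 := sub_ne_zero.2 hx1.symm
  field_simp
  ring

theorem V_first_integral_general (xbar gbar p K : ℝ)
    (hp : 0 < p)
    (I : Set ℝ) (hI : I.OrdConnected) (x g : ℝ → ℝ)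
    (hmem : ∀ t ∈ I, x t ∈ Set.Ioo (0 : ℝ) 1 ∧ 0 < g t)
    (hx : ∀ t ∈ I, HasDerivAt x (-(x t) ^ 2 * (1 - x t) * (g t - gbar)) t)
    (hg : ∀ t ∈ I, HasDerivAt g (p * g t * (x t - xbar)) t) :
    ∀ t ∈ I, ∀ s ∈ I, V xbar gbar p K (x t) (g t) = V xbar gbar p K (x s) (g s) := by
  refine fun t ht s hs => hI.eq_of_hasDerivAt_eq_zero
    (f := fun u => V xbar gbar p K (x u) (g u)) (fun u hu => ?_) ht hs
  obtain ⟨⟨hx0, hx1⟩, hg0⟩ := hmem u hu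
  exact (hasDerivAt_V_comp (hx u hu) (hg u hu) hx0.ne' hx1.ne hg0.ne').congr_deriv
    (V_deriv_along_field_eq_zero hp.ne' hx0.ne' hx1.ne hg0.ne')

/-- `V` is a first integral of the reduced system
`ẋ = −x²(1−x)(g − gbar)`, `ġ = p·g·(x − xbar)`: it is constant along any solution that stays
in `(0,1) × (0,∞)` on an interval `I`. -/
theorem V_first_integral (xbar gbar p K : ℝ) (hxbar : xbar ∈ Set.Ioo (0 : ℝ) 1)
    (hgbar : 0 < gbar) (hp : 0 < p)
    (I : Set ℝ) (hI : I.OrdConnected) (x g : ℝ → ℝ)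
    (hmem : ∀ t ∈ I, x t ∈ Set.Ioo (0 : ℝ) 1 ∧ 0 < g t)
    (hx : ∀ t ∈ I, HasDerivAt x (-(x t) ^ 2 * (1 - x t) * (g t - gbar)) t)
    (hg : ∀ t ∈ I, HasDerivAt g (p * g t * (x t - xbar)) t) :
    ∀ t ∈ I, ∀ s ∈ I, V xbar gbar p K (x t) (g t) = V xbar gbar p K (x s) (g s) :=
  V_first_integral_general xbar gbar p K hp I hI x g hmem hx hg
end

section
/- Let x̄ ∈ (0,1), ḡ > 0, p > 0, β > 0, K ∈ ℝ, and define V(x, g) = x̄/x + (1−x̄)·ln(x/(1−x)) + (g − ḡ·ln g)/p + K for x ∈ (0,1) and g > 0. If x, g : I → ℝ are differentiable on an interval I with x(t) ∈ (0,1) and g(t) > 0 for all t ∈ I, and satisfy ẋ = (β/x̄)·x(1−x)(x̄ − x) − x²(1−x)(g − ḡ) and ġ = p·g·(x − x̄) on I, then for every t ∈ I the derivative of t ↦ V(x(t), g(t)) equals −β·(x(t) − x̄)²/(x(t)·x̄); in particular it is nonpositive, and it vanishes exactly when x(t) = x̄. -/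
/-- Along solutions of `ẋ = (β/xbar)·x(1−x)(xbar − x) − x²(1−x)(g − gbar)`, `ġ = p·g·(x − xbar)`
staying in `(0,1) × (0,∞)`, the derivative of `t ↦ V(x(t), g(t))` equals
`−β·(x(t) − xbar)²/(x(t)·xbar)`; in particular it is nonpositive, and it vanishes exactly
when `x(t) = xbar`. -/
theorem V_decreasing (xbar gbar p β K : ℝ) (hxbar : xbar ∈ Set.Ioo (0 : ℝ) 1)
    (hgbar : 0 < gbar) (hp : 0 < p) (hβ : 0 < β)
    (I : Set ℝ) (hI : I.OrdConnected) (x g : ℝ → ℝ)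
    (hmem : ∀ t ∈ I, x t ∈ Set.Ioo (0 : ℝ) 1 ∧ 0 < g t)
    (hx : ∀ t ∈ I, HasDerivAt x
      (β / xbar * (x t * (1 - x t) * (xbar - x t)) - (x t) ^ 2 * (1 - x t) * (g t - gbar)) t)
    (hg : ∀ t ∈ I, HasDerivAt g (p * g t * (x t - xbar)) t) :
    ∀ t ∈ I,
      HasDerivAt (fun s => V xbar gbar p K (x s) (g s))
        (-(β * (x t - xbar) ^ 2 / (x t * xbar))) t ∧
      -(β * (x t - xbar) ^ 2 / (x t * xbar)) ≤ 0 ∧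
      (-(β * (x t - xbar) ^ 2 / (x t * xbar)) = 0 ↔ x t = xbar) := by
  intro t ht
  obtain ⟨⟨hx0, hx1⟩, hg0⟩ := hmem t ht
  have hxt := hx t ht
  have hgt := hg t ht
  set u := x t with hu
  set v := g t with hv
  set x' := β / xbar * (u * (1 - u) * (xbar - u)) - u ^ 2 * (1 - u) * (v - gbar) with hx'
  set g' := p * v * (u - xbar) with hg'
  have hu0 : u ≠ 0 := ne_of_gt hx0
  have hu1 : (1 : ℝ) - u ≠ 0 := by linarith
  have hv0 : v ≠ 0 := ne_of_gt hg0
  have hp0 : p ≠ 0 := ne_of_gt hp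
  have hxb0 : xbar ≠ 0 := ne_of_gt hxbar.1
  -- derivative of xbar / x s
  have h1 : HasDerivAt (fun s => xbar / x s) ((0 * u - xbar * x') / u ^ 2) t :=
    (hasDerivAt_const t xbar).div hxt hu0
  -- derivative of x s / (1 - x s)
  have hq : HasDerivAt (fun s => x s / (1 - x s))
      ((x' * (1 - u) - u * (0 - x')) / (1 - u) ^ 2) t :=
    hxt.div ((hasDerivAt_const t (1:ℝ)).sub hxt) hu1
  have hquot0 : u / (1 - u) ≠ 0 := div_ne_zero hu0 hu1
  have h2 : HasDerivAt (fun s => (1 - xbar) * Real.log (x s / (1 - x s)))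
      ((1 - xbar) * (((x' * (1 - u) - u * (0 - x')) / (1 - u) ^ 2) / (u / (1 - u)))) t :=
    (hq.log hquot0).const_mul (1 - xbar)
  -- derivative of (g s - gbar * log (g s)) / p
  have h3 : HasDerivAt (fun s => (g s - gbar * Real.log (g s)) / p)
      ((g' - gbar * (g' / v)) / p) t :=
    (hgt.sub ((hgt.log hv0).const_mul gbar)).div_const p
  have hsum := ((h1.add h2).add h3).add_const K
  have : HasDerivAt (fun s => V xbar gbar p K (x s) (g s))
      ((0 * u - xbar * x') / u ^ 2 +
        (1 - xbar) * (((x' * (1 - u) - u * (0 - x')) / (1 - u) ^ 2) / (u / (1 - u))) +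
        (g' - gbar * (g' / v)) / p) t := by
    simpa [V] using hsum
  refine ⟨?_, ?_, ?_⟩
  · convert this using 1
    rw [hx', hg']
    field_simp
    ring
  · have hnum : 0 ≤ β * (u - xbar) ^ 2 := by positivity
    have hden : 0 < u * xbar := mul_pos hx0 hxbar.1
    have := div_nonneg hnum hden.le
    linarith
  · constructor
    · intro h
      have hden : u * xbar ≠ 0 := ne_of_gt (mul_pos hx0 hxbar.1)
      have h' : β * (u - xbar) ^ 2 / (u * xbar) = 0 := by linarith
      have hnum : β * (u - xbar) ^ 2 = 0 :=
        (div_eq_zero_iff.mp h').resolve_right hden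
      have := (mul_eq_zero.mp hnum).resolve_left (ne_of_gt hβ)
      have := pow_eq_zero_iff (n := 2) (by norm_num) |>.mp this
      linarith
    · intro h; rw [h]; simp
end

section
/- Let x̄ ∈ (0,1), ḡ > 0, p > 0, and set K = −1 − (1−x̄)·ln(x̄/(1−x̄)) − (ḡ/p)·(1 − ln ḡ). Define V(x, g) = x̄/x + (1−x̄)·ln(x/(1−x)) + (g − ḡ·ln g)/p + K for x ∈ (0,1) and g > 0. Then V(x, g) ≥ 0 for all x ∈ (0,1) and g > 0, and V(x, g) = 0 if and only if x = x̄ and g = ḡ; that is, V has a strict global minimum, equal to 0, at the point (x̄, ḡ). -/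
open Real Set

noncomputable def volterraFun (t : ℝ) : ℝ := t - 1 - log t

lemma volterraFun_nonneg {t : ℝ} (ht : 0 < t) : 0 ≤ volterraFun t := by
  unfold volterraFun
  linarith [log_le_sub_one_of_pos ht]

lemma volterraFun_eq_zero_iff {t : ℝ} (ht : 0 < t) : volterraFun t = 0 ↔ t = 1 := by
  refine ⟨fun h => by_contra fun hne => ?_, fun h => by simp [volterraFun, h]⟩
  unfold volterraFun at h
  linarith [log_lt_sub_one_of_pos ht hne]

lemma V_eq_sum_volterraFun {xbar gbar p K x g : ℝ} (hxbar : xbar ∈ Ioo (0 : ℝ) 1)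
    (hgbar : 0 < gbar)
    (hK : K = -1 - (1 - xbar) * log (xbar / (1 - xbar)) - gbar / p * (1 - log gbar))
    (hx : x ∈ Ioo (0 : ℝ) 1) (hg : 0 < g) :
    V xbar gbar p K x g =
      volterraFun (xbar / x) + xbar * volterraFun (x / xbar)
        + (1 - xbar) * volterraFun ((1 - x) / (1 - xbar)) + gbar / p * volterraFun (g / gbar) := by
  obtain ⟨hxbar0, hxbar1⟩ := hxbar
  obtain ⟨hx0, hx1⟩ := hx
  have hxbar1' : (1 - xbar) ≠ 0 := by linarith
  have hx1' : (1 - x) ≠ 0 := by linarith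
  simp only [V, volterraFun, hK]
  rw [log_div hxbar0.ne' hx0.ne', log_div hx0.ne' hxbar0.ne', log_div hx1' hxbar1',
    log_div hx0.ne' hx1', log_div hxbar0.ne' hxbar1', log_div hg.ne' hgbar.ne']
  field_simp
  ring

/-- With `K = −1 − (1−xbar)·ln(xbar/(1−xbar)) − (gbar/p)·(1 − ln gbar)`, the function `V` is
nonnegative on `(0,1) × (0,∞)` and vanishes exactly at `(xbar, gbar)`: it has a strict
global minimum, equal to `0`, at `(xbar, gbar)`. -/
theorem V_global_minimum (xbar gbar p K : ℝ) (hxbar : xbar ∈ Set.Ioo (0 : ℝ) 1)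
    (hgbar : 0 < gbar) (hp : 0 < p)
    (hK : K = -1 - (1 - xbar) * Real.log (xbar / (1 - xbar)) - gbar / p * (1 - Real.log gbar)) :
    (∀ x g : ℝ, x ∈ Set.Ioo (0 : ℝ) 1 → 0 < g → 0 ≤ V xbar gbar p K x g) ∧
    (∀ x g : ℝ, x ∈ Set.Ioo (0 : ℝ) 1 → 0 < g →
      (V xbar gbar p K x g = 0 ↔ x = xbar ∧ g = gbar)) := by
  have hxbar0 := hxbar.1
  have hxbar1 : 0 < 1 - xbar := sub_pos.2 hxbar.2
  have hweight : 0 < gbar / p := div_pos hgbar hp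
  have terms_nonneg : ∀ x g : ℝ, x ∈ Ioo (0 : ℝ) 1 → 0 < g →
      0 ≤ volterraFun (xbar / x) ∧ 0 ≤ xbar * volterraFun (x / xbar) ∧
        0 ≤ (1 - xbar) * volterraFun ((1 - x) / (1 - xbar)) ∧
        0 ≤ gbar / p * volterraFun (g / gbar) := fun x g hx hg =>
    ⟨volterraFun_nonneg (div_pos hxbar0 hx.1),
      mul_nonneg hxbar0.le (volterraFun_nonneg (div_pos hx.1 hxbar0)),
      mul_nonneg hxbar1.le (volterraFun_nonneg (div_pos (sub_pos.2 hx.2) hxbar1)),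
      mul_nonneg hweight.le (volterraFun_nonneg (div_pos hg hgbar))⟩
  refine ⟨fun x g hx hg => ?_, fun x g hx hg => ?_⟩
  · obtain ⟨h₁, h₂, h₃, h₄⟩ := terms_nonneg x g hx hg
    rw [V_eq_sum_volterraFun hxbar hgbar hK hx hg]
    linarith
  · obtain ⟨h₁, h₂, h₃, h₄⟩ := terms_nonneg x g hx hg
    rw [V_eq_sum_volterraFun hxbar hgbar hK hx hg]
    constructor
    · intro hV
      have hx_term : xbar * volterraFun (x / xbar) = 0 := by linarith
      have hg_term : gbar / p * volterraFun (g / gbar) = 0 := by linarith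
      rw [mul_eq_zero_iff_left hxbar0.ne', volterraFun_eq_zero_iff (div_pos hx.1 hxbar0),
        div_eq_one_iff_eq hxbar0.ne'] at hx_term
      rw [mul_eq_zero_iff_left hweight.ne', volterraFun_eq_zero_iff (div_pos hg hgbar),
        div_eq_one_iff_eq hgbar.ne'] at hg_term
      exact ⟨hx_term, hg_term⟩
    · rintro ⟨rfl, rfl⟩
      simp [div_self hxbar0.ne', div_self hxbar1.ne', div_self hgbar.ne', volterraFun]
end
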